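/- Let A = {a_0, …, a_{N−1}} be a finite subset of ℤ, spectral with spectrum Γ with 0 ∈ Γ, and suppose the local translation matrix B associated to Γ (with respect to this enumeration of A and some enumeration of Γ) is the N×N cyclic permutation matrix with ones in positions (i, i+1) for i = 0, …, N−2 and in position (N−1, 0), and zeros elsewhere. Then A tiles ℤ by Nℤ; that is, the sets A + t, t ∈ Nℤ, form a partition of ℤ, equivalently A is a complete set of residues modulo N. -/

import Mathlib

/-!
Since `F` is unitary, `B = F* D F` being the cyclic shift `C` gives `D^N = F C^N F* = 1`, that is
`e^{2πiNλ} = 1` for every `λ ∈ Γ`. If two distinct elements `a ≠ a'` of `A` were congruent modulo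
`N`, every term of the orthogonality sum `Σ_λ e^{2πi(a−a')λ}` would then equal `1`, so the sum
would be `N` instead of `0`. Hence `A` injects into `ℤ/Nℤ` and, having `N` elements, is a complete
set of residues.
-/

open Complex Real Matrix

noncomputable section

/-- The enumerations `a : Fin N → ℤ` and `l : Fin N → ℝ` list a finite set `A ⊂ ℤ` together
with a spectrum `Γ ⊂ ℝ` for it: both are injective and
`Σ_{i} e^{2πi(a_j−a_k)λ_i} = N·δ_{jk}`. -/
def IsSpectrumPair (N : ℕ) (a : Fin N → ℤ) (l : Fin N → ℝ) : Prop :=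
  Function.Injective a ∧ Function.Injective l ∧
  ∀ j k : Fin N,
    ∑ i : Fin N, Complex.exp (2 * Real.pi * Complex.I *
      (((a j : ℤ) : ℂ) - ((a k : ℤ) : ℂ)) * ((l i : ℝ) : ℂ)) =
    if j = k then (N : ℂ) else 0

/-- The Fourier matrix `F = (1/√N)(e^{−2πiλ_j a_k})_{j,k}`. -/
def FmatFin (N : ℕ) (a : Fin N → ℤ) (l : Fin N → ℝ) : Matrix (Fin N) (Fin N) ℂ := fun j k =>
  (1 / Real.sqrt N : ℝ) *
    Complex.exp (-(2 * Real.pi * Complex.I) * ((l j : ℝ) : ℂ) * ((a k : ℤ) : ℂ))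

/-- The diagonal matrix `D_Γ(t)` with entries `e^{2πiλ_j t}`. -/
def DmatFin (N : ℕ) (l : Fin N → ℝ) (t : ℝ) : Matrix (Fin N) (Fin N) ℂ :=
  Matrix.diagonal fun j => Complex.exp (2 * Real.pi * Complex.I * ((l j : ℝ) : ℂ) * (t : ℂ))

/-- The group of local translations `U_Γ(t) = F* D_Γ(t) F`. -/
def UmatFin (N : ℕ) (a : Fin N → ℤ) (l : Fin N → ℝ) (t : ℝ) : Matrix (Fin N) (Fin N) ℂ :=
  (FmatFin N a l)ᴴ * DmatFin N l t * FmatFin N a l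

/-- The local translation matrix `B = U_Γ(1) = F* D_Γ F`. -/
def BmatFin (N : ℕ) (a : Fin N → ℤ) (l : Fin N → ℝ) : Matrix (Fin N) (Fin N) ℂ :=
  UmatFin N a l 1

theorem Matrix.permMatrix_pow {n R : Type*} [DecidableEq n] [Fintype n] [Semiring R]
    (σ : Equiv.Perm n) (k : ℕ) : (σ ^ k).permMatrix R = σ.permMatrix R ^ k := by
  induction k with
  | zero => simp
  | succ k ih => rw [pow_succ, permMatrix_mul, ih, pow_succ']

theorem Equiv.addRight_pow_card {G : Type*} [AddGroup G] [Fintype G] (g : G) :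
    Equiv.addRight g ^ Fintype.card G = 1 := by
  rw [nsmul_addRight, card_nsmul_eq_zero, addRight_zero]

theorem Matrix.permMatrix_addRight_pow_card {G R : Type*} [AddGroup G] [Fintype G] [DecidableEq G]
    [Semiring R] (g : G) : (Equiv.addRight g).permMatrix R ^ Fintype.card G = 1 := by
  rw [← permMatrix_pow, Equiv.addRight_pow_card, permMatrix_one]

theorem Fin.permMatrix_addRight_one {N : ℕ} [NeZero N] {R : Type*} [Zero R] [One R] :
    (Equiv.addRight (1 : Fin N)).permMatrix R =
      fun i j : Fin N => if (j : ℕ) = ((i : ℕ) + 1) % N then 1 else 0 := by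
  ext i j
  simp [PEquiv.toMatrix_apply, Fin.ext_iff, Fin.val_add, eq_comm]

theorem pow_eq_one_of_conj_pow_eq_one {M : Type*} [Monoid M] {u v d : M} (hvu : v * u = 1)
    (huv : u * v = 1) {n : ℕ} (h : (v * d * u) ^ n = 1) : d ^ n = 1 := by
  let U : Mˣ := ⟨u, v, huv, hvu⟩
  have hconj : (v * d * u) ^ n = v * d ^ n * u := Units.conj_pow' U d n
  calc d ^ n = u * (v * d ^ n * u) * v := by
        simp only [← mul_assoc, huv, one_mul]; rw [mul_assoc, huv, mul_one]
    _ = 1 := by rw [← hconj, h, mul_one, huv]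

section SpectrumPair

variable {N : ℕ} {a : Fin N → ℤ} {l : Fin N → ℝ}

theorem IsSpectrumPair.conjTranspose_fmatFin_mul_self (h : IsSpectrumPair N a l) :
    (FmatFin N a l)ᴴ * FmatFin N a l = 1 := by
  ext j k
  have hsq : ((1 / √N : ℝ) : ℂ) * ((1 / √N : ℝ) : ℂ) = 1 / N := by
    rw [← ofReal_mul, div_mul_div_comm, one_mul, mul_self_sqrt (Nat.cast_nonneg N)]
    push_cast; ring
  have hterm : ∀ i : Fin N, star (FmatFin N a l i j) * FmatFin N a l i k =
      1 / N * exp (2 * π * I * ((a j : ℂ) - (a k : ℂ)) * (l i : ℂ)) := by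
    intro i
    simp only [FmatFin, star_mul', star_def, ← exp_conj, conj_ofReal]
    rw [mul_mul_mul_comm, hsq, ← Complex.exp_add]
    congr 2
    simp only [map_mul, map_neg, conj_I, conj_ofReal, map_ofNat, map_intCast]
    ring
  simp only [mul_apply, conjTranspose_apply, hterm, ← Finset.mul_sum, h.2.2 j k, one_apply]
  have hN : (N : ℂ) ≠ 0 := Nat.cast_ne_zero.mpr j.pos.ne'
  split_ifs <;> simp [hN]

theorem IsSpectrumPair.exp_mul_card_eq_one (h : IsSpectrumPair N a l)
    (hB : BmatFin N a l ^ N = 1) (i : Fin N) : exp (2 * π * I * l i * N) = 1 := by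
  have hF := h.conjTranspose_fmatFin_mul_self
  have hD : DmatFin N l 1 ^ N = 1 := pow_eq_one_of_conj_pow_eq_one hF (mul_eq_one_comm.mp hF) hB
  rw [DmatFin, diagonal_pow, ← diagonal_one, diagonal_eq_diagonal_iff] at hD
  simpa [← Complex.exp_nat_mul, mul_comm, mul_left_comm] using hD i

theorem IsSpectrumPair.injective_intCast_zmod (h : IsSpectrumPair N a l)
    (hl : ∀ i, exp (2 * π * I * l i * N) = 1) :
    Function.Injective fun k => (a k : ZMod N) := by
  intro j k hjk
  by_contra hne
  obtain ⟨c, hc⟩ : (N : ℤ) ∣ a j - a k := (ZMod.intCast_eq_intCast_iff_dvd_sub _ _ _).mp hjk.symm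
  have hterm : ∀ i, exp (2 * π * I * ((a j : ℂ) - (a k : ℂ)) * l i) = 1 := by
    intro i
    have hdiff : (a j : ℂ) - a k = N * c := by exact_mod_cast congrArg (Int.cast : ℤ → ℂ) hc
    rw [hdiff, ← _root_.one_zpow c, ← hl i, ← exp_int_mul]
    ring_nf
  have hsum := h.2.2 j k
  simp only [hterm, if_neg hne, Finset.sum_const, Finset.card_univ, Fintype.card_fin,
    nsmul_eq_mul, mul_one, Nat.cast_eq_zero] at hsum
  exact absurd hsum j.pos.ne'

end SpectrumPair

theorem existsUnique_eq_add_mul_of_bijective {ι : Type*} {N : ℕ} [NeZero N] {a : ι → ℤ}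
    (ha : Function.Bijective fun k => (a k : ZMod N)) (x : ℤ) :
    ∃! p : ι × ℤ, x = a p.1 + N * p.2 := by
  obtain ⟨k, hk, hk_unique⟩ := ha.existsUnique (x : ZMod N)
  obtain ⟨m, hm⟩ : (N : ℤ) ∣ x - a k := (ZMod.intCast_eq_intCast_iff_dvd_sub _ _ _).mp hk
  refine ⟨(k, m), by linarith, ?_⟩
  rintro ⟨k', m'⟩ hx
  obtain rfl : k' = k := hk_unique k' (by simp [hx])
  have : (N : ℤ) * m' = N * m := by linarith
  simp [mul_left_cancel₀ (Int.natCast_ne_zero.mpr (NeZero.ne N)) this]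

theorem cyclic_local_translation_matrix_implies_tiling_general (N : ℕ) (hN : 0 < N)
    (a : Fin N → ℤ) (l : Fin N → ℝ) (h : IsSpectrumPair N a l)
    (hB : BmatFin N a l = fun i j : Fin N =>
      if (j : ℕ) = ((i : ℕ) + 1) % N then 1 else 0) :
    (∀ x : ℤ, ∃! p : Fin N × ℤ, x = a p.1 + N * p.2) ∧
    (∀ z : ZMod N, ∃! k : Fin N, ((a k : ℤ) : ZMod N) = z) := by
  have : NeZero N := ⟨hN.ne'⟩
  have hl := h.exp_mul_card_eq_one (by
    rw [hB, ← Fin.permMatrix_addRight_one]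
    simpa using permMatrix_addRight_pow_card (R := ℂ) (1 : Fin N))
  have hbij : Function.Bijective fun k => (a k : ZMod N) :=
    (Fintype.bijective_iff_injective_and_card _).mpr
      ⟨h.injective_intCast_zmod hl, by simp [ZMod.card]⟩
  exact ⟨existsUnique_eq_add_mul_of_bijective hbij, hbij.existsUnique⟩

/-- if `A = {a_0, …, a_{N−1}}` is spectral with spectrum `Γ ∋ 0` and the
associated local translation matrix `B` is the cyclic permutation matrix (ones in positions
`(i, i+1 mod N)`), then `A` tiles `ℤ` by `Nℤ`: the sets `A + t`, `t ∈ Nℤ`, partition `ℤ`,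
equivalently `A` is a complete set of residues modulo `N`. -/
theorem cyclic_local_translation_matrix_implies_tiling (N : ℕ) (hN : 0 < N)
    (a : Fin N → ℤ) (l : Fin N → ℝ) (h : IsSpectrumPair N a l)
    (h0 : ∃ i, l i = 0)
    (hB : BmatFin N a l = fun i j : Fin N =>
      if (j : ℕ) = ((i : ℕ) + 1) % N then 1 else 0) :
    (∀ x : ℤ, ∃! p : Fin N × ℤ, x = a p.1 + N * p.2) ∧
    (∀ z : ZMod N, ∃! k : Fin N, ((a k : ℤ) : ZMod N) = z) :=
  cyclic_local_translation_matrix_implies_tiling_general N hN a l h hB
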